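/- arXiv:2012.10938 — 2 statements merged into one kernel-verified Lean document; each statement's English description precedes it below -/
import Mathlib

section
/- Baumkuchen Theorem: Let D and D̃ be concentric closed disks centered at O with radii R > r > 0, and let B = D \ int(D̃) be the resulting annulus. Let P be a point of D̃ and n ≥ 4 an even integer. Draw n lines through P at equal angles π/n, cutting the annulus B into 2n pieces: for 1 ≤ j ≤ 2n, Piece(j) is the intersection of B with the j-th closed angular sector of aperture π/n at P, sectors numbered consecutively clockwise. Then for every 1 ≤ k ≤ n, the sum of the areas of Piece(k) and Piece(k+n) equals (1/n)·π(R² − r²), i.e. 1/n times the area of B. -/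
/-!
In polar coordinates centred at `P`, the part of a disk `closedBall O ρ ∋ P` in a sector has area
`∫ d(φ)² / 2`, where `d(φ)` is the distance from `P` to the circle in direction `φ`. With
`u = ⟪O - P, e^{iφ}⟫` and `s = √(ρ² - ‖O - P‖² + u²)` the two opposite distances are
`d(φ) = u + s` and `d(φ + π) = s - u`, so `d(φ)² + d(φ + π)² = 2 (ρ² - ‖O - P‖²) + 4 u²`.
The term `4 u²` does not depend on `ρ`, so for the annulus (radius `R` minus radius `r`) a pair of
opposite pieces integrates the constant `R² - r²` over an angle of width `π / n`.
-/

open Real MeasureTheory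

/-- The closed angular sector at `P` of directions with angles in `[a, b]`. -/
def angularSector (P : ℂ) (a b : ℝ) : Set ℂ :=
  {z : ℂ | ∃ t : ℝ, 0 ≤ t ∧ ∃ φ : ℝ, a ≤ φ ∧ φ ≤ b ∧
    z = P + (t : ℂ) * Complex.exp ((φ : ℝ) * Complex.I)}

open Complex (I)

/-- For `‖c‖ ≤ ρ`, the larger root `t` of `‖t e^{iφ} - c‖ = ρ`: the ray from `0` in direction `φ`
leaves `closedBall c ρ` at distance `exitDist c ρ φ`. -/
noncomputable def exitDist (c : ℂ) (ρ φ : ℝ) : ℝ :=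
  inner ℝ c (Complex.exp (φ * I)) + √(ρ ^ 2 - ‖c‖ ^ 2 + inner ℝ c (Complex.exp (φ * I)) ^ 2)

@[fun_prop]
theorem continuous_exitDist (c : ℂ) (ρ : ℝ) : Continuous (exitDist c ρ) := by
  unfold exitDist; fun_prop

theorem abs_inner_le_sqrt {c : ℂ} {ρ : ℝ} (hc : ‖c‖ ≤ ρ) (φ : ℝ) :
    |inner ℝ c (Complex.exp (φ * I))| ≤ √(ρ ^ 2 - ‖c‖ ^ 2 + inner ℝ c (Complex.exp (φ * I)) ^ 2) :=
  Real.abs_le_sqrt (by nlinarith [norm_nonneg c])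

theorem exitDist_nonneg {c : ℂ} {ρ : ℝ} (hc : ‖c‖ ≤ ρ) (φ : ℝ) : 0 ≤ exitDist c ρ φ := by
  have := abs_inner_le_sqrt hc φ
  rw [exitDist]; linarith [neg_abs_le (inner ℝ c (Complex.exp (φ * I)))]

theorem exitDist_mono {c : ℂ} {ρ₁ ρ₂ : ℝ} (h₀ : 0 ≤ ρ₁) (h : ρ₁ ≤ ρ₂) (φ : ℝ) :
    exitDist c ρ₁ φ ≤ exitDist c ρ₂ φ := by
  unfold exitDist; gcongr

theorem exitDist_sq_add_exitDist_add_pi_sq {c : ℂ} {ρ : ℝ} (hc : ‖c‖ ≤ ρ) (φ : ℝ) :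
    exitDist c ρ φ ^ 2 + exitDist c ρ (φ + π) ^ 2 =
      2 * (ρ ^ 2 - ‖c‖ ^ 2) + 4 * inner ℝ c (Complex.exp (φ * I)) ^ 2 := by
  have hexp : Complex.exp (↑(φ + π) * I) = -Complex.exp (φ * I) := by
    rw [Complex.ofReal_add, add_mul, Complex.exp_add, Complex.exp_pi_mul_I, mul_neg_one]
  have hs := Real.sq_sqrt (by nlinarith [norm_nonneg c] :
    0 ≤ ρ ^ 2 - ‖c‖ ^ 2 + inner ℝ c (Complex.exp (φ * I)) ^ 2)
  rw [exitDist, exitDist, hexp, inner_neg_right, neg_sq]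
  linear_combination 2 * hs

theorem exitDist_exp_mul (c : ℂ) (ρ γ ψ : ℝ) :
    exitDist (Complex.exp (-γ * I) * c) ρ ψ = exitDist c ρ (ψ + γ) := by
  have hinner : inner ℝ (Complex.exp (-γ * I) * c) (Complex.exp (ψ * I)) =
      inner ℝ c (Complex.exp (↑(ψ + γ) * I)) := by
    simp only [Complex.inner, map_mul, ← Complex.exp_conj]
    congr 1
    rw [mul_left_comm, ← mul_assoc, ← Complex.exp_add]
    congr 2
    simp only [map_neg, Complex.conj_ofReal, Complex.conj_I, mul_neg, neg_mul, neg_neg,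
      Complex.ofReal_add]
    ring
  rw [exitDist, exitDist, hinner, norm_mul, ← Complex.ofReal_neg, Complex.norm_exp_ofReal_mul_I,
    one_mul]

theorem mem_closedBall_iff_le_exitDist {c : ℂ} {ρ t φ : ℝ} (hc : ‖c‖ ≤ ρ) (ht : 0 < t) :
    t * Complex.exp (φ * I) ∈ Metric.closedBall c ρ ↔ t ≤ exitDist c ρ φ := by
  have hsqrt := abs_inner_le_sqrt hc φ
  have hc2 : ‖c‖ ^ 2 ≤ ρ ^ 2 := pow_le_pow_left₀ (norm_nonneg c) hc 2
  rw [exitDist]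
  set u := inner ℝ c (Complex.exp (φ * I))
  have hnorm : ‖t * Complex.exp (φ * I) - c‖ ^ 2 = t ^ 2 - 2 * t * u + ‖c‖ ^ 2 := by
    rw [norm_sub_sq_real, norm_mul, Complex.norm_exp_ofReal_mul_I, Complex.norm_real,
      Real.norm_of_nonneg ht.le, ← Complex.real_smul, real_inner_smul_left, real_inner_comm]
    ring
  rw [Metric.mem_closedBall, dist_eq_norm, ← sq_le_sq₀ (norm_nonneg _) ((norm_nonneg c).trans hc),
    hnorm, ← sub_le_iff_le_add']
  rcases le_or_gt (t - u) 0 with h | h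
  · have : u ≤ √(ρ ^ 2 - ‖c‖ ^ 2 + u ^ 2) := (le_abs_self u).trans hsqrt
    constructor <;> intro <;> nlinarith
  · rw [Real.le_sqrt h.le (by nlinarith)]
    constructor <;> intro <;> nlinarith

theorem angularSector_zero_eq {a b : ℝ} (ha : -π < a) (hab : a ≤ b) (hb : b ≤ π) :
    angularSector 0 a b = insert 0 (Complex.arg ⁻¹' Set.Icc a b) := by
  ext z
  constructor
  · rintro ⟨t, ht, φ, haφ, hφb, rfl⟩
    rcases ht.eq_or_lt with rfl | ht
    · simp
    · right
      rw [zero_add, Set.mem_preimage, Complex.exp_mul_I,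
        Complex.arg_mul_cos_add_sin_mul_I ht ⟨by linarith, by linarith⟩]
      exact ⟨haφ, hφb⟩
  · rintro (rfl | ⟨haz, hzb⟩)
    · exact ⟨0, le_rfl, a, le_rfl, hab, by simp⟩
    · exact ⟨‖z‖, norm_nonneg z, z.arg, haz, hzb, by rw [zero_add, Complex.norm_mul_exp_arg_mul_I]⟩

theorem lintegral_Ioc_ofReal {d : ℝ} (hd : 0 ≤ d) :
    ∫⁻ t in Set.Ioc 0 d, ENNReal.ofReal t = ENNReal.ofReal (d ^ 2 / 2) := by
  rw [← ofReal_integral_eq_lintegral_ofReal, ← intervalIntegral.integral_of_le hd, integral_id]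
  · ring_nf
  · exact (intervalIntegral.intervalIntegrable_id (a := 0) (b := d)).1
  · exact (ae_restrict_iff' measurableSet_Ioc).2 (ae_of_all _ fun t ht => ht.1.le)

def polarRegion (f : ℝ → ℝ) (a b : ℝ) : Set (ℝ × ℝ) :=
  {p | p.2 ∈ Set.Icc a b ∧ p.1 ∈ Set.Ioc 0 (f p.2)}

theorem measurableSet_polarRegion {f : ℝ → ℝ} (hf : Measurable f) (a b : ℝ) :
    MeasurableSet (polarRegion f a b) :=
  (measurable_snd measurableSet_Icc).inter ((measurable_fst measurableSet_Ioi).inter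
    (measurableSet_le measurable_fst (hf.comp measurable_snd)))

theorem setLIntegral_polarRegion {f : ℝ → ℝ} (hf : Continuous f) {a b : ℝ} (hab : a ≤ b)
    (hf₀ : ∀ φ ∈ Set.Icc a b, 0 ≤ f φ) :
    ∫⁻ p in polarRegion f a b, ENNReal.ofReal p.1 = ENNReal.ofReal (∫ φ in a..b, f φ ^ 2 / 2) := by
  set T := polarRegion f a b
  have hfiber : ∀ φ, ∫⁻ t, T.indicator (fun p => ENNReal.ofReal p.1) (t, φ) =
      (Set.Icc a b).indicator (fun φ => ENNReal.ofReal (f φ ^ 2 / 2)) φ := by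
    intro φ
    by_cases hφ : φ ∈ Set.Icc a b
    · have : (fun t => T.indicator (fun p => ENNReal.ofReal p.1) (t, φ)) =
          (Set.Ioc 0 (f φ)).indicator ENNReal.ofReal := by
        ext t; simp [T, polarRegion, Set.indicator_apply, hφ.1, hφ.2]
      rw [this, lintegral_indicator measurableSet_Ioc, Set.indicator_of_mem hφ,
        lintegral_Ioc_ofReal (hf₀ φ hφ)]
    · have hzero : ∀ t, T.indicator (fun p => ENNReal.ofReal p.1) (t, φ) = 0 :=
        fun t => Set.indicator_of_notMem (fun h => hφ h.1) _
      simp only [hzero, lintegral_zero, Set.indicator_of_notMem hφ]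
  have hT := measurableSet_polarRegion hf.measurable a b
  calc (∫⁻ p in T, ENNReal.ofReal p.1)
      = ∫⁻ φ, ∫⁻ t, T.indicator (fun p => ENNReal.ofReal p.1) (t, φ) := by
        rw [← lintegral_indicator hT, Measure.volume_eq_prod, lintegral_prod_symm _
          (measurable_fst.ennreal_ofReal.indicator hT).aemeasurable]
    _ = ∫⁻ φ in Set.Icc a b, ENNReal.ofReal (f φ ^ 2 / 2) := by
      simp_rw [hfiber]; exact lintegral_indicator measurableSet_Icc _
    _ = ENNReal.ofReal (∫ φ in a..b, f φ ^ 2 / 2) := by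
      rw [← ofReal_integral_eq_lintegral_ofReal, integral_Icc_eq_integral_Ioc,
        ← intervalIntegral.integral_of_le hab]
      · exact ((hf.pow 2).div_const 2).integrableOn_Icc
      · exact ae_of_all _ fun φ => by positivity

theorem polarCoord_symm_mem_closedBall_inter_angularSector_iff {c : ℂ} {ρ a b : ℝ}
    (hc : ‖c‖ ≤ ρ) (ha : -π < a) (hab : a ≤ b) (hb : b ≤ π) {p : ℝ × ℝ}
    (hp : p ∈ polarCoord.target) :
    Complex.polarCoord.symm p ∈ Metric.closedBall c ρ ∩ angularSector 0 a b ↔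
      p ∈ polarRegion (exitDist c ρ) a b := by
  obtain ⟨t, φ⟩ := p
  have ht : 0 < t := hp.1
  have hsymm : Complex.polarCoord.symm (t, φ) = t * Complex.exp (φ * I) := by
    rw [Complex.polarCoord_symm_apply, Complex.exp_mul_I]; push_cast; rfl
  have harg : Complex.arg (t * Complex.exp (φ * I)) = φ := by
    rw [Complex.exp_mul_I, Complex.arg_mul_cos_add_sin_mul_I ht ⟨hp.2.1, hp.2.2.le⟩]
  have hne : (t : ℂ) * Complex.exp (φ * I) ≠ 0 :=
    mul_ne_zero (Complex.ofReal_ne_zero.2 ht.ne') (Complex.exp_ne_zero _)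
  simp only [polarRegion, hsymm, Set.mem_inter_iff, angularSector_zero_eq ha hab hb,
    Set.mem_insert_iff, hne, false_or, Set.mem_preimage, harg, Set.mem_ofPred_eq,
    Set.mem_Ioc, mem_closedBall_iff_le_exitDist hc ht, ht, true_and]
  exact and_comm

theorem volume_closedBall_inter_angularSector_zero {c : ℂ} {ρ a b : ℝ} (hc : ‖c‖ ≤ ρ)
    (ha : -π < a) (hab : a ≤ b) (hb : b < π) :
    volume (Metric.closedBall c ρ ∩ angularSector 0 a b) =
      ENNReal.ofReal (∫ φ in a..b, exitDist c ρ φ ^ 2 / 2) := by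
  have hK : MeasurableSet (Metric.closedBall c ρ ∩ angularSector 0 a b) := by
    rw [angularSector_zero_eq ha hab hb.le]
    exact measurableSet_closedBall.inter ((Complex.measurable_arg measurableSet_Icc).insert 0)
  set K := Metric.closedBall c ρ ∩ angularSector 0 a b
  set T := polarRegion (exitDist c ρ) a b
  have hT : MeasurableSet T := measurableSet_polarRegion (continuous_exitDist c ρ).measurable a b
  have hTtarget : T ⊆ polarCoord.target := fun p hp =>
    ⟨hp.2.1, ha.trans_le hp.1.1, hp.1.2.trans_lt hb⟩
  have hindicator : ∀ p ∈ polarCoord.target,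
      ENNReal.ofReal p.1 • K.indicator 1 (Complex.polarCoord.symm p) =
        T.indicator (fun p => ENNReal.ofReal p.1) p := by
    intro p hp
    by_cases h : p ∈ T
    · rw [Set.indicator_of_mem h, Set.indicator_of_mem
        ((polarCoord_symm_mem_closedBall_inter_angularSector_iff hc ha hab hb.le hp).2 h),
        Pi.one_apply, smul_eq_mul, mul_one]
    · rw [Set.indicator_of_notMem h, Set.indicator_of_notMem
        (mt (polarCoord_symm_mem_closedBall_inter_angularSector_iff hc ha hab hb.le hp).1 h),
        smul_zero]
  calc volume K = ∫⁻ z, K.indicator 1 z := (lintegral_indicator_one hK).symm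
    _ = ∫⁻ p in polarCoord.target, ENNReal.ofReal p.1 • K.indicator 1 (Complex.polarCoord.symm p) :=
      (Complex.lintegral_comp_polarCoord_symm _).symm
    _ = ∫⁻ p in polarCoord.target, T.indicator (fun p => ENNReal.ofReal p.1) p :=
      setLIntegral_congr_fun polarCoord.open_target.measurableSet hindicator
    _ = ∫⁻ p in T, ENNReal.ofReal p.1 := by
      rw [setLIntegral_indicator hT, Set.inter_eq_left.2 hTtarget]
    _ = _ := setLIntegral_polarRegion (continuous_exitDist c ρ) hab fun φ _ => exitDist_nonneg hc φ

theorem exp_mul_sub_mem_angularSector_zero_iff {P z : ℂ} {a b γ : ℝ} :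
    Complex.exp (-γ * I) * (z - P) ∈ angularSector 0 (a - γ) (b - γ) ↔ z ∈ angularSector P a b := by
  have hrot : ∀ t φ : ℝ, Complex.exp (-γ * I) * (t * Complex.exp (φ * I)) =
      t * Complex.exp (↑(φ - γ) * I) := by
    intro t φ
    rw [mul_left_comm, ← Complex.exp_add]
    push_cast; ring_nf
  constructor
  · rintro ⟨t, ht, ψ, hψa, hψb, h⟩
    refine ⟨t, ht, ψ + γ, by linarith, by linarith, ?_⟩
    have : z - P = t * Complex.exp (↑(ψ + γ) * I) :=
      mul_left_cancel₀ (Complex.exp_ne_zero _) (by rw [h, hrot, add_sub_cancel_right, zero_add])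
    linear_combination this
  · rintro ⟨t, ht, φ, hφa, hφb, rfl⟩
    exact ⟨t, ht, φ - γ, by linarith, by linarith, by rw [add_sub_cancel_left, hrot, zero_add]⟩

theorem volume_preimage_exp_mul_sub (γ : ℝ) (P : ℂ) (A : Set ℂ) :
    volume ((fun z => Complex.exp (-γ * I) * (z - P)) ⁻¹' A) = volume A := by
  set u := Circle.exp (-γ)
  have : (fun z => Complex.exp (-γ * I) * (z - P)) ⁻¹' A = (· + -P) ⁻¹' (rotation u ⁻¹' A) := by
    ext z
    simp only [Set.mem_preimage, rotation_apply, u, Circle.coe_exp, sub_eq_add_neg,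
      Complex.ofReal_neg, neg_mul]
  rw [this, measure_preimage_add_right, (rotation u).measurePreserving.measure_preimage_emb
    (rotation u).toHomeomorph.measurableEmbedding]

theorem volume_closedBall_inter_angularSector {O P : ℂ} {ρ a b : ℝ} (hc : ‖O - P‖ ≤ ρ)
    (hab : a ≤ b) (hba : b - a < 2 * π) :
    volume (Metric.closedBall O ρ ∩ angularSector P a b) =
      ENNReal.ofReal (∫ φ in a..b, exitDist (O - P) ρ φ ^ 2 / 2) := by
  -- Rotating about `P` by the mid-angle `γ` puts the sector inside the range `(-π, π)` of `arg`.
  set γ := (a + b) / 2 with hγ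
  have hrot : ‖Complex.exp (-γ * I)‖ = 1 := by
    rw [← Complex.ofReal_neg, Complex.norm_exp_ofReal_mul_I]
  have hpre : Metric.closedBall O ρ ∩ angularSector P a b =
      (fun z => Complex.exp (-γ * I) * (z - P)) ⁻¹'
        (Metric.closedBall (Complex.exp (-γ * I) * (O - P)) ρ ∩
          angularSector 0 (a - γ) (b - γ)) := by
    ext z
    simp only [Set.mem_preimage, Set.mem_inter_iff, exp_mul_sub_mem_angularSector_zero_iff,
      Metric.mem_closedBall, dist_eq_norm, ← mul_sub, sub_sub_sub_cancel_right, norm_mul, hrot,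
      one_mul]
  rw [hpre, volume_preimage_exp_mul_sub, volume_closedBall_inter_angularSector_zero
    (by rwa [norm_mul, hrot, one_mul]) (by rw [hγ]; linarith) (by linarith) (by rw [hγ]; linarith)]
  simp_rw [exitDist_exp_mul]
  rw [intervalIntegral.integral_comp_add_right (fun φ => exitDist (O - P) ρ φ ^ 2 / 2),
    sub_add_cancel, sub_add_cancel]

theorem MeasureTheory.Measure.addHaar_closedBall_sdiff_ball_inter {E : Type*} [NormedAddCommGroup E]
    [NormedSpace ℝ E] [MeasurableSpace E] [BorelSpace E] [FiniteDimensional ℝ E] [Nontrivial E]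
    (μ : Measure E) [μ.IsAddHaarMeasure] (x : E) {r R : ℝ} (hrR : r ≤ R) (S : Set E) :
    μ ((Metric.closedBall x R \ Metric.ball x r) ∩ S) =
      μ (Metric.closedBall x R ∩ S) - μ (Metric.closedBall x r ∩ S) := by
  have hinner :
      μ (Metric.closedBall x R ∩ S ∩ Metric.ball x r) = μ (Metric.closedBall x r ∩ S) := by
    rw [← measure_sdiff_null (s := Metric.closedBall x r ∩ S) (Measure.addHaar_sphere μ x r)]
    congr 1
    ext z
    simp only [Set.mem_inter_iff, Set.mem_sdiff, Metric.mem_ball, Metric.mem_closedBall,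
      Metric.mem_sphere, lt_iff_le_and_ne]
    constructor
    · rintro ⟨⟨-, hS⟩, h, hne⟩; exact ⟨⟨h, hS⟩, hne⟩
    · rintro ⟨⟨h, hS⟩, hne⟩; exact ⟨⟨h.trans hrR, hS⟩, h, hne⟩
  refine ENNReal.eq_sub_of_add_eq (measure_inter_lt_top_of_left_ne_top
    measure_closedBall_lt_top.ne).ne ?_
  rw [← hinner, add_comm, Set.sdiff_inter_right_comm]
  exact measure_inter_add_sdiff _ measurableSet_ball

theorem volume_annulus_inter_angularSector {O P : ℂ} {r R a b : ℝ} (hP : ‖O - P‖ ≤ r)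
    (hrR : r ≤ R) (hab : a ≤ b) (hba : b - a < 2 * π) :
    volume ((Metric.closedBall O R \ Metric.ball O r) ∩ angularSector P a b) =
      ENNReal.ofReal (∫ φ in a..b, (exitDist (O - P) R φ ^ 2 - exitDist (O - P) r φ ^ 2) / 2) := by
  have hint : ∀ ρ, IntervalIntegrable (fun φ => exitDist (O - P) ρ φ ^ 2 / 2) volume a b :=
    fun ρ => (((continuous_exitDist _ ρ).pow 2).div_const 2).intervalIntegrable a b
  rw [Measure.addHaar_closedBall_sdiff_ball_inter volume O hrR,
    volume_closedBall_inter_angularSector (hP.trans hrR) hab hba,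
    volume_closedBall_inter_angularSector hP hab hba,
    ← ENNReal.ofReal_sub _ (intervalIntegral.integral_nonneg hab fun φ _ => by positivity),
    ← intervalIntegral.integral_sub (hint R) (hint r)]
  simp_rw [sub_div]

theorem volume_annulus_inter_angularSector_add_opposite {O P : ℂ} {r R α w : ℝ}
    (hP : ‖O - P‖ ≤ r) (hrR : r ≤ R) (hw₀ : 0 ≤ w) (hw : w < 2 * π) :
    volume ((Metric.closedBall O R \ Metric.ball O r) ∩ angularSector P α (α + w)) +
      volume ((Metric.closedBall O R \ Metric.ball O r) ∩ angularSector P (α + π) (α + π + w)) =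
      ENNReal.ofReal (w * (R ^ 2 - r ^ 2)) := by
  set f := fun φ => (exitDist (O - P) R φ ^ 2 - exitDist (O - P) r φ ^ 2) / 2
  have hf : Continuous f := by fun_prop
  have hr : 0 ≤ r := (norm_nonneg _).trans hP
  have hf₀ : ∀ φ, 0 ≤ f φ := fun φ => by
    have := exitDist_mono (c := O - P) hr hrR φ
    have := exitDist_nonneg hP φ
    simp only [f]; nlinarith
  have hopp : ∀ φ, f φ + f (φ + π) = R ^ 2 - r ^ 2 := fun φ => by
    have hR := exitDist_sq_add_exitDist_add_pi_sq (hP.trans hrR) φ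
    have hr := exitDist_sq_add_exitDist_add_pi_sq hP φ
    simp only [f]; linear_combination (hR - hr) / 2
  have hshift : ∫ φ in α + π..α + π + w, f φ = ∫ φ in α..α + w, f (φ + π) := by
    rw [intervalIntegral.integral_comp_add_right f π, add_right_comm]
  rw [volume_annulus_inter_angularSector hP hrR (by linarith) (by linarith),
    volume_annulus_inter_angularSector hP hrR (by linarith) (by linarith),
    ← ENNReal.ofReal_add (intervalIntegral.integral_nonneg (by linarith) fun φ _ => hf₀ φ)
      (intervalIntegral.integral_nonneg (by linarith) fun φ _ => hf₀ φ)]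
  congr 1
  change (∫ φ in α..α + w, f φ) + ∫ φ in α + π..α + π + w, f φ = _
  rw [hshift, ← intervalIntegral.integral_add (hf.intervalIntegrable _ _)
    ((by fun_prop : Continuous fun φ => f (φ + π)).intervalIntegrable _ _)]
  simp only [hopp, intervalIntegral.integral_const, smul_eq_mul, add_sub_cancel_left]

theorem baumkuchen_stmt6_general
    (O P : ℂ) (R r : ℝ) (hrR : r < R)
    (hP : P ∈ Metric.closedBall O r)
    (n : ℕ) (θ : ℝ) :
    ∀ k : ℕ, 1 ≤ k → k ≤ n →
      volume ((Metric.closedBall O R \ interior (Metric.closedBall O r)) ∩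
          angularSector P (θ + ((k - 1 : ℕ) : ℝ) * π / n) (θ + (k : ℝ) * π / n)) +
      volume ((Metric.closedBall O R \ interior (Metric.closedBall O r)) ∩
          angularSector P (θ + ((k + n - 1 : ℕ) : ℝ) * π / n) (θ + ((k + n : ℕ) : ℝ) * π / n)) =
      ENNReal.ofReal (1 / n * (π * (R ^ 2 - r ^ 2))) := by
  intro k hk hkn
  have hn : (1 : ℝ) ≤ n := by exact_mod_cast hk.trans hkn
  set α := θ + ((k - 1 : ℕ) : ℝ) * π / n
  have hcast : ((k - 1 : ℕ) : ℝ) = k - 1 := by rw [Nat.cast_sub hk, Nat.cast_one]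
  have h₁ : θ + (k : ℝ) * π / n = α + π / n := by simp only [α, hcast]; ring
  have h₂ : θ + ((k + n - 1 : ℕ) : ℝ) * π / n = α + π := by
    rw [Nat.sub_add_comm hk, Nat.cast_add]; simp only [α]; field_simp; ring
  have h₃ : θ + ((k + n : ℕ) : ℝ) * π / n = α + π + π / n := by
    simp only [α, hcast, Nat.cast_add]; field_simp; ring
  have hw : π / n < 2 * π := by
    rw [div_lt_iff₀ (by linarith)]; nlinarith [pi_pos]
  rw [h₁, h₂, h₃, interior_closedBall', volume_annulus_inter_angularSector_add_opposite
    (by rwa [← dist_eq_norm, dist_comm]) hrR.le (by positivity) hw]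
  congr 1
  ring

/-- Baumkuchen Theorem: `B = D \ int(D̃)` the annulus between concentric
closed disks of radii `R > r > 0` about `O`; `P ∈ D̃`; `n ≥ 4` even.  The `n` lines
through `P` at angles `θ + jπ/n` cut `B` into `2n` pieces, `Piece(j)` being `B`
intersected with the sector at `P` of angles `[θ + (j−1)π/n, θ + jπ/n]`.  Then for each
`1 ≤ k ≤ n` the areas of `Piece(k)` and `Piece(k+n)` sum to `(1/n)·π(R² − r²)`. -/
theorem baumkuchen_stmt6
    (O P : ℂ) (R r : ℝ) (hr : 0 < r) (hrR : r < R)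
    (hP : P ∈ Metric.closedBall O r)
    (n : ℕ) (hn : 4 ≤ n) (hev : Even n) (θ : ℝ) :
    ∀ k : ℕ, 1 ≤ k → k ≤ n →
      volume ((Metric.closedBall O R \ interior (Metric.closedBall O r)) ∩
          angularSector P (θ + ((k - 1 : ℕ) : ℝ) * π / n) (θ + (k : ℝ) * π / n)) +
      volume ((Metric.closedBall O R \ interior (Metric.closedBall O r)) ∩
          angularSector P (θ + ((k + n - 1 : ℕ) : ℝ) * π / n) (θ + ((k + n : ℕ) : ℝ) * π / n)) =
      ENNReal.ofReal (1 / n * (π * (R ^ 2 - r ^ 2))) :=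
  baumkuchen_stmt6_general O P R r hrR hP n θ
end

section
/- Opposite sectors of an annulus through a boundary point of the inner circle: two opposite (antipodal with respect to P) angular sectors of equal aperture α at a point P on the inner circle cut out regions of the annulus whose total area equals (α/π)·(area of the annulus). Precisely: let D, D̃ be concentric disks centered at O with radii R > r, B = D \ int(D̃), and P with dist(O,P) = r. For any half-line ℓ from P at angle θ and aperture 0 < α ≤ π, let S(θ) be the closed sector {P + t(cos φ, sin φ) : t ≥ 0, θ ≤ φ ≤ θ + α}. Then area(B ∩ S(θ)) + area(B ∩ S(θ + π)) = α(R² − r²). -/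
/-!
Rotating about `P` by a suitable angle (an isometry preserving Lebesgue measure) turns the two
sectors into the same sector `[a, b] ⊂ (-π, π)` at the origin, cut against the annulus centred at
`w` and at `-w` respectively, where `‖w‖ = r`. In polar coordinates about the origin, the ray of
direction `e` meets the annulus centred at `w` in `t ∈ [max 0 (2u), u + √(u² + R² - r²)]` with
`u = Re (e w̄)`, and so contributes `annulusRayArea (R² - r²) u = ∫ t dt` per unit angle. The
centre `-w` gives `-u` instead, and the two contributions always add up to `R² - r²`.
-/

open Real MeasureTheory

open Set Metric Complex ComplexConjugate

noncomputable def annulusRayArea (d u : ℝ) : ℝ :=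
  ((u + √(u ^ 2 + d)) ^ 2 - max 0 (2 * u) ^ 2) / 2

lemma max_zero_two_mul_le_add_sqrt {d : ℝ} (hd : 0 ≤ d) (u : ℝ) :
    max 0 (2 * u) ≤ u + √(u ^ 2 + d) := by
  have h : |u| ≤ √(u ^ 2 + d) := by
    rw [← sqrt_sq_eq_abs]; exact sqrt_le_sqrt (by linarith)
  exact max_le (by linarith [neg_abs_le u]) (by linarith [le_abs_self u])

lemma annulusRayArea_nonneg {d : ℝ} (hd : 0 ≤ d) (u : ℝ) : 0 ≤ annulusRayArea d u := by
  have h := max_zero_two_mul_le_add_sqrt hd u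
  unfold annulusRayArea
  nlinarith [le_max_left 0 (2 * u)]

lemma annulusRayArea_add_neg {d : ℝ} (hd : 0 ≤ d) (u : ℝ) :
    annulusRayArea d u + annulusRayArea d (-u) = d := by
  have hs : √(u ^ 2 + d) ^ 2 = u ^ 2 + d := sq_sqrt (by positivity)
  have hmax : max 0 (2 * u) ^ 2 + max 0 (2 * -u) ^ 2 = 4 * u ^ 2 := by
    rcases le_total 0 u with hu | hu
    · rw [max_eq_right (by linarith), max_eq_left (by linarith)]; ring
    · rw [max_eq_left (by linarith), max_eq_right (by linarith)]; ring
  unfold annulusRayArea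
  rw [neg_sq]
  linear_combination hs - hmax / 2

lemma sq_dist_ofReal_mul {w e : ℂ} (he : ‖e‖ = 1) (t : ℝ) :
    dist ((t : ℂ) * e) w ^ 2 = t ^ 2 - 2 * t * (e * conj w).re + ‖w‖ ^ 2 := by
  rw [dist_eq_norm, Complex.sq_norm, Complex.sq_norm, normSq_sub, normSq_mul, normSq_ofReal,
    ← Complex.sq_norm, he, mul_assoc (t : ℂ), re_ofReal_mul]
  ring

lemma ofReal_mul_mem_annulus_iff {w e : ℂ} {r R t : ℝ} (hw : ‖w‖ = r) (he : ‖e‖ = 1)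
    (hrR : r ≤ R) (ht : 0 < t) :
    (t : ℂ) * e ∈ closedBall w R \ ball w r ↔
      max 0 (2 * (e * conj w).re) ≤ t ∧
        t ≤ (e * conj w).re + √((e * conj w).re ^ 2 + (R ^ 2 - r ^ 2)) := by
  set u := (e * conj w).re
  have hr : 0 ≤ r := hw ▸ norm_nonneg w
  have hd : 0 ≤ R ^ 2 - r ^ 2 := by nlinarith
  have hs : √(u ^ 2 + (R ^ 2 - r ^ 2)) ^ 2 = u ^ 2 + (R ^ 2 - r ^ 2) := sq_sqrt (by positivity)
  have hus : u ≤ √(u ^ 2 + (R ^ 2 - r ^ 2)) :=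
    (le_abs_self u).trans (by rw [← sqrt_sq_eq_abs]; exact sqrt_le_sqrt (by linarith))
  have hdist := sq_dist_ofReal_mul he t (w := w)
  rw [hw] at hdist
  rw [mem_sdiff, mem_closedBall, mem_ball, not_lt, ← sq_le_sq₀ dist_nonneg (hr.trans hrR),
    ← sq_le_sq₀ hr dist_nonneg, hdist, max_le_iff]
  constructor
  · rintro ⟨hout, hin⟩
    refine ⟨⟨ht.le, by nlinarith⟩, ?_⟩
    nlinarith [sqrt_nonneg (u ^ 2 + (R ^ 2 - r ^ 2))]
  · rintro ⟨⟨-, hin⟩, hout⟩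
    constructor <;> nlinarith [sqrt_nonneg (u ^ 2 + (R ^ 2 - r ^ 2))]

lemma setLIntegral_Icc_ofReal {x y : ℝ} (hx : 0 ≤ x) (hxy : x ≤ y) :
    ∫⁻ t in Icc x y, ENNReal.ofReal t = ENNReal.ofReal ((y ^ 2 - x ^ 2) / 2) := by
  rw [← ofReal_integral_eq_lintegral_ofReal continuous_id'.integrableOn_Icc
      ((ae_restrict_mem measurableSet_Icc).mono fun t ht => hx.trans ht.1),
    integral_Icc_eq_integral_Ioc, ← intervalIntegral.integral_of_le hxy, integral_id]

lemma lintegral_ofReal_mul_indicator_annulus {w e : ℂ} {r R : ℝ} (hw : ‖w‖ = r)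
    (he : ‖e‖ = 1) (hrR : r ≤ R) :
    ∫⁻ t : ℝ, ENNReal.ofReal t * (closedBall w R \ ball w r).indicator 1 ((t : ℂ) * e) =
      ENNReal.ofReal (annulusRayArea (R ^ 2 - r ^ 2) (e * conj w).re) := by
  have hd : 0 ≤ R ^ 2 - r ^ 2 := by nlinarith [hw ▸ norm_nonneg w]
  have hIcc : (fun t : ℝ =>
        ENNReal.ofReal t * (closedBall w R \ ball w r).indicator 1 ((t : ℂ) * e)) =
      (Icc (max 0 (2 * (e * conj w).re))
        ((e * conj w).re + √((e * conj w).re ^ 2 + (R ^ 2 - r ^ 2)))).indicator ENNReal.ofReal := by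
    funext t
    rcases lt_or_ge 0 t with ht | ht
    · have hmem := ofReal_mul_mem_annulus_iff hw he hrR ht
      by_cases h : (t : ℂ) * e ∈ closedBall w R \ ball w r
      · rw [indicator_of_mem h, indicator_of_mem (show t ∈ Icc _ _ from hmem.1 h),
          Pi.one_apply, mul_one]
      · rw [indicator_of_notMem h, indicator_of_notMem (show t ∉ Icc _ _ from mt hmem.2 h),
          mul_zero]
    · simp [ENNReal.ofReal_of_nonpos ht, indicator_apply]
  rw [hIcc, lintegral_indicator measurableSet_Icc,
    setLIntegral_Icc_ofReal (le_max_left _ _) (max_zero_two_mul_le_add_sqrt hd _)]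
  rfl

lemma arg_exp_mul_I_of_mem_Ioc {φ : ℝ} (hφ : φ ∈ Ioc (-π) π) : arg (exp (φ * I)) = φ := by
  rw [exp_mul_I, arg_cos_add_sin_mul_I hφ]

lemma ofReal_mul_exp_mem_angularSector_zero_iff {t φ a b : ℝ} (ht : 0 < t)
    (hφ : φ ∈ Ioc (-π) π) (ha : -π < a) (hb : b ≤ π) :
    (t : ℂ) * exp (φ * I) ∈ angularSector 0 a b ↔ φ ∈ Icc a b := by
  constructor
  · rintro ⟨s, hs, ψ, haψ, hψb, h⟩
    rw [zero_add] at h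
    have hs0 : 0 < s := hs.lt_of_ne <| by
      rintro rfl
      simp [ht.ne', Complex.exp_ne_zero] at h
    have hargs := congrArg arg h
    rw [arg_real_mul _ ht, arg_real_mul _ hs0, arg_exp_mul_I_of_mem_Ioc hφ,
      arg_exp_mul_I_of_mem_Ioc ⟨ha.trans_le haψ, hψb.trans hb⟩] at hargs
    exact hargs ▸ ⟨haψ, hψb⟩
  · rintro ⟨haφ, hφb⟩
    exact ⟨t, ht.le, φ, haφ, hφb, (zero_add _).symm⟩

lemma measurableSet_angularSector (P : ℂ) (a b : ℝ) : MeasurableSet (angularSector P a b) := by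
  have himage : angularSector P a b =
      (fun q : ℝ × ℝ => P + q.1 * exp (q.2 * I)) '' (Ici 0 ×ˢ Icc a b) := by
    ext z
    constructor
    · rintro ⟨t, ht, φ, haφ, hφb, rfl⟩
      exact ⟨(t, φ), ⟨ht, haφ, hφb⟩, rfl⟩
    · rintro ⟨⟨t, φ⟩, ⟨ht, haφ, hφb⟩, rfl⟩
      exact ⟨t, ht, φ, haφ, hφb, rfl⟩
  obtain ⟨K, hK, hKU⟩ : IsSigmaCompact (angularSector P a b) := by
    rw [himage]
    exact (isSigmaCompact_univ.of_isClosed_subset (isClosed_Ici.prod isClosed_Icc)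
      (subset_univ _)).image (by fun_prop)
  rw [← hKU]
  exact .iUnion fun n => (hK n).isClosed.measurableSet

lemma volume_inter_angularSector_zero {C : Set ℂ} (hC : MeasurableSet C) {a b : ℝ}
    (ha : -π < a) (hb : b < π) :
    volume (C ∩ angularSector 0 a b) =
      ∫⁻ φ in Icc a b, ∫⁻ t : ℝ, ENNReal.ofReal t * C.indicator 1 ((t : ℂ) * exp (φ * I)) := by
  set A := C ∩ angularSector 0 a b
  have hA : MeasurableSet A := hC.inter (measurableSet_angularSector 0 a b)
  have hslice : ∀ φ ∈ Ioo (-π) π, ∀ t : ℝ,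
      ENNReal.ofReal t * A.indicator 1 ((t : ℂ) * exp (φ * I)) =
        (Icc a b).indicator
          (fun _ => ENNReal.ofReal t * C.indicator 1 ((t : ℂ) * exp (φ * I))) φ := by
    intro φ hφ t
    rcases lt_or_ge 0 t with ht | ht
    · have hS := ofReal_mul_exp_mem_angularSector_zero_iff ht (Ioo_subset_Ioc_self hφ) ha hb.le
      by_cases hφab : φ ∈ Icc a b
      · rw [indicator_of_mem hφab, inter_indicator_one, Pi.mul_apply,
          indicator_of_mem (hS.2 hφab), Pi.one_apply, mul_one]
      · rw [indicator_of_notMem hφab, indicator_of_notMem fun h => hφab (hS.1 h.2), mul_zero]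
    · simp [ENNReal.ofReal_of_nonpos ht, indicator_apply]
  calc volume A = ∫⁻ z, A.indicator 1 z := (lintegral_indicator_one hA).symm
    _ = ∫⁻ p in Ioi 0 ×ˢ Ioo (-π) π,
          ENNReal.ofReal p.1 * A.indicator 1 ((p.1 : ℂ) * exp (p.2 * I)) := by
      rw [← Complex.lintegral_comp_polarCoord_symm, polarCoord_target]
      simp only [Complex.polarCoord_symm_apply, smul_eq_mul, ofReal_cos, ofReal_sin, exp_mul_I]
    _ = ∫⁻ φ in Ioo (-π) π, ∫⁻ t in Ioi 0,
          ENNReal.ofReal t * A.indicator 1 ((t : ℂ) * exp (φ * I)) := by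
      rw [Measure.volume_eq_prod, ← Measure.prod_restrict, lintegral_prod_symm']
      exact (ENNReal.measurable_ofReal.comp measurable_fst).mul
        ((measurable_one.indicator hA).comp (by fun_prop))
    _ = ∫⁻ φ in Ioo (-π) π, (Icc a b).indicator
          (fun φ => ∫⁻ t : ℝ, ENNReal.ofReal t * C.indicator 1 ((t : ℂ) * exp (φ * I))) φ := by
      refine setLIntegral_congr_fun measurableSet_Ioo fun φ hφ => ?_
      rw [setLIntegral_eq_of_support_subset]
      · by_cases hφab : φ ∈ Icc a b <;> simp [hslice φ hφ, hφab]
      · intro t ht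
        by_contra hnt
        exact ht (by simp [ENNReal.ofReal_of_nonpos (not_lt.1 hnt)])
    _ = _ := by
      rw [lintegral_indicator measurableSet_Icc,
        Measure.restrict_restrict_of_subset (Icc_subset_Ioo ha hb)]

lemma measurable_annulusRayArea (d : ℝ) : Measurable (annulusRayArea d) := by
  unfold annulusRayArea
  fun_prop

lemma volume_annulus_inter_angularSector_add_neg {w : ℂ} {r R a b : ℝ} (hw : ‖w‖ = r)
    (hrR : r ≤ R) (ha : -π < a) (hb : b < π) :
    volume ((closedBall w R \ ball w r) ∩ angularSector 0 a b) +
      volume ((closedBall (-w) R \ ball (-w) r) ∩ angularSector 0 a b) =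
      ENNReal.ofReal ((b - a) * (R ^ 2 - r ^ 2)) := by
  have hd : 0 ≤ R ^ 2 - r ^ 2 := by nlinarith [hw ▸ norm_nonneg w]
  have hann (v : ℂ) : MeasurableSet (closedBall v R \ ball v r) :=
    measurableSet_closedBall.diff measurableSet_ball
  have hray (v : ℂ) (hv : ‖v‖ = r) (φ : ℝ) :
      ∫⁻ t : ℝ,
          ENNReal.ofReal t * (closedBall v R \ ball v r).indicator 1 ((t : ℂ) * exp (φ * I)) =
        ENNReal.ofReal (annulusRayArea (R ^ 2 - r ^ 2) (exp (φ * I) * conj v).re) :=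
    lintegral_ofReal_mul_indicator_annulus hv (norm_exp_ofReal_mul_I φ) hrR
  rw [volume_inter_angularSector_zero (hann w) ha hb,
    volume_inter_angularSector_zero (hann (-w)) ha hb]
  simp only [hray w hw, hray (-w) (by rw [norm_neg, hw]), map_neg, mul_neg, neg_re]
  have hmeas : Measurable fun φ : ℝ =>
      ENNReal.ofReal (annulusRayArea (R ^ 2 - r ^ 2) (exp (φ * I) * conj w).re) :=
    ((measurable_annulusRayArea _).comp (by fun_prop)).ennreal_ofReal
  rw [← lintegral_add_left hmeas]
  simp only [← ENNReal.ofReal_add (annulusRayArea_nonneg hd _) (annulusRayArea_nonneg hd _),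
    annulusRayArea_add_neg hd, setLIntegral_const, volume_Icc]
  rw [← ENNReal.ofReal_mul hd, mul_comm]

lemma preimage_exp_mul_sub_angularSector_zero (P : ℂ) (γ a b : ℝ) :
    (fun z => exp (γ * I) * (z - P)) ⁻¹' angularSector 0 (a + γ) (b + γ) =
      angularSector P a b := by
  have hexp (φ : ℝ) : exp (γ * I) * exp (φ * I) = exp (↑(φ + γ) * I) := by
    rw [← Complex.exp_add]; push_cast; ring_nf
  ext z
  constructor
  · rintro ⟨t, ht, φ, haφ, hφb, hz⟩
    refine ⟨t, ht, φ - γ, by linarith, by linarith, mul_left_cancel₀ (exp_ne_zero (γ * I)) ?_⟩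
    have hk := hexp (φ - γ)
    rw [sub_add_cancel] at hk
    linear_combination hz - t * hk
  · rintro ⟨t, ht, φ, haφ, hφb, rfl⟩
    exact ⟨t, ht, φ + γ, by linarith, by linarith, by linear_combination t * hexp φ⟩

lemma measurePreserving_exp_mul_sub (γ : ℝ) (P : ℂ) :
    MeasurePreserving (fun z : ℂ => exp (γ * I) * (z - P)) := by
  simpa [Function.comp_def, rotation_apply, Circle.coe_exp] using
    (rotation (Circle.exp γ)).measurePreserving.comp (measurePreserving_sub_right volume P)

lemma isometry_exp_mul_sub (γ : ℝ) (P : ℂ) : Isometry (fun z : ℂ => exp (γ * I) * (z - P)) :=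
  Isometry.of_dist_eq fun x y => by
    rw [Complex.dist_eq, ← mul_sub, norm_mul, norm_exp_ofReal_mul_I, one_mul,
      sub_sub_sub_cancel_right, ← Complex.dist_eq]

lemma volume_annulus_inter_angularSector_eq_rotate (O P : ℂ) (r R γ a b : ℝ) :
    volume ((closedBall O R \ ball O r) ∩ angularSector P a b) =
      volume ((closedBall (exp (γ * I) * (O - P)) R \ ball (exp (γ * I) * (O - P)) r) ∩
        angularSector 0 (a + γ) (b + γ)) := by
  have hf := isometry_exp_mul_sub γ P
  rw [← hf.preimage_closedBall O R, ← hf.preimage_ball O r,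
    ← preimage_exp_mul_sub_angularSector_zero P γ a b, ← preimage_sdiff, ← preimage_inter]
  exact (measurePreserving_exp_mul_sub γ P).measure_preimage
    ((measurableSet_closedBall.diff measurableSet_ball).inter
      (measurableSet_angularSector 0 _ _)).nullMeasurableSet

theorem baumkuchen_stmt8_general
    (O P : ℂ) (R r : ℝ) (hr : 0 < r) (hrR : r < R)
    (hP : dist O P = r) (α : ℝ) (hαπ : α ≤ π) :
    ∀ θ : ℝ,
      volume ((Metric.closedBall O R \ interior (Metric.closedBall O r)) ∩
          angularSector P θ (θ + α)) +
      volume ((Metric.closedBall O R \ interior (Metric.closedBall O r)) ∩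
          angularSector P (θ + π) (θ + π + α)) =
      ENNReal.ofReal (α * (R ^ 2 - r ^ 2)) := by
  intro θ
  obtain ⟨γ, hγ⟩ : ∃ γ : ℝ, γ = -(θ + α / 2) := ⟨_, rfl⟩
  have hw : ‖exp (γ * I) * (O - P)‖ = r := by
    rw [norm_mul, norm_exp_ofReal_mul_I, one_mul, ← Complex.dist_eq, hP]
  have hopp : exp (↑(γ - π) * I) * (O - P) = -(exp (γ * I) * (O - P)) := by
    rw [ofReal_sub, sub_mul, Complex.exp_sub, exp_pi_mul_I]; ring
  rw [interior_closedBall O hr.ne', volume_annulus_inter_angularSector_eq_rotate O P r R γ,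
    volume_annulus_inter_angularSector_eq_rotate O P r R (γ - π), hopp,
    show θ + π + (γ - π) = θ + γ by ring, show θ + π + α + (γ - π) = θ + α + γ by ring,
    volume_annulus_inter_angularSector_add_neg hw hrR.le (by linarith [pi_pos])
      (by linarith [pi_pos])]
  ring_nf

/-- for the annulus `B = D \ int(D̃)` between concentric disks of radii
`R > r > 0` about `O`, and `P` on the inner circle (`dist(O,P) = r`), any two opposite
closed sectors at `P` of aperture `0 < α ≤ π` cut out regions of `B` of total area
`α(R² − r²)` (that is, `(α/π)` times the area `π(R² − r²)` of the annulus). -/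
theorem baumkuchen_stmt8
    (O P : ℂ) (R r : ℝ) (hr : 0 < r) (hrR : r < R)
    (hP : dist O P = r) (α : ℝ) (hα : 0 < α) (hαπ : α ≤ π) :
    ∀ θ : ℝ,
      volume ((Metric.closedBall O R \ interior (Metric.closedBall O r)) ∩
          angularSector P θ (θ + α)) +
      volume ((Metric.closedBall O R \ interior (Metric.closedBall O r)) ∩
          angularSector P (θ + π) (θ + π + α)) =
      ENNReal.ofReal (α * (R ^ 2 - r ^ 2)) :=
  baumkuchen_stmt8_general O P R r hr hrR hP α hαπ
end
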